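/- arXiv:1903.00325 — 3 statements merged into one kernel-verified Lean document; each statement's English description precedes it below -/
import Mathlib

section
/- Let x ∈ ℝ³ be nonzero and suppose (u,v), (u′,v′) ∈ ℂ² ∖ {(0,0)} satisfy h(u,v) = x and h(u′,v′) = −x. Then u·v′ − u′·v ≠ 0; equivalently, the 2×2 matrix whose columns are the coefficient vectors (−v, u) and (−v′, u′) of the linear polynomials p(t) = u·t − v and q(t) = u′·t − v′ has nonzero determinant. In particular, Hopf lifts of antipodal nonzero vectors in ℝ³ are linearly independent over ℂ. -/
/-! If `u v' = u' v` then `(u', v') = l • (u, v)` for some `l : ℂ`, and the Hopf map is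
homogeneous of weight `|l|²`, so `-x = |l|² • x`, i.e. `(1 + |l|²) • x = 0`, forcing `x = 0`. -/

/-- The Hopf map `h : ℂ² → ℝ³`, where `ℝ³` is identified with `ℂ × ℝ`:
`h(u,v) = (2·u·conj v, |u|² − |v|²)`. -/
noncomputable def hopf (p : ℂ × ℂ) : ℂ × ℝ :=
  (2 * p.1 * (starRingEnd ℂ) p.2, ‖p.1‖ ^ 2 - ‖p.2‖ ^ 2)

theorem exists_eq_smul_of_mul_sub_mul_eq_zero {K : Type*} [Field K] {a b c d : K}
    (hab : (a, b) ≠ (0, 0)) (h : a * d - c * b = 0) : ∃ l : K, (c, d) = l • (a, b) := by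
  by_cases ha : a = 0
  · have hb : b ≠ 0 := fun hb => hab (by rw [ha, hb])
    have hc : c = 0 := by simpa [ha, hb] using h
    exact ⟨d / b, by simp [ha, hc, hb]⟩
  · refine ⟨c / a, Prod.ext (by simp [ha]) ?_⟩
    simp only [Prod.smul_mk, smul_eq_mul]
    field_simp
    linear_combination h

theorem hopf_smul (l : ℂ) (p : ℂ × ℂ) : hopf (l • p) = (‖l‖ ^ 2) • hopf p := by
  have hl : ((‖l‖ ^ 2 : ℝ) : ℂ) = l * (starRingEnd ℂ) l := by
    rw [Complex.mul_conj, Complex.normSq_eq_norm_sq]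
  obtain ⟨a, b⟩ := p
  simp only [hopf, Prod.smul_mk, smul_eq_mul, map_mul, norm_mul, Complex.real_smul, hl]
  ext <;> dsimp only <;> ring

theorem hopf_antipodal_lifts_indep_general (x : ℂ × ℝ) (hx : x ≠ 0)
    (u v u' v' : ℂ) (h0 : (u, v) ≠ (0, 0))
    (h1 : hopf (u, v) = x) (h2 : hopf (u', v') = -x) :
    u * v' - u' * v ≠ 0 ∧ (Matrix.det !![-v, -v'; u, u']) ≠ 0 := by
  have hdet : Matrix.det !![-v, -v'; u, u'] = u * v' - u' * v := by
    rw [Matrix.det_fin_two_of]; ring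
  suffices h : u * v' - u' * v ≠ 0 from ⟨h, hdet ▸ h⟩
  intro hc
  obtain ⟨l, hl⟩ := exists_eq_smul_of_mul_sub_mul_eq_zero h0 hc
  have hsum : (1 + ‖l‖ ^ 2) • x = 0 := by
    rw [hl, hopf_smul, h1] at h2
    rw [add_smul, one_smul, h2, add_neg_cancel]
  exact hx ((smul_eq_zero.mp hsum).resolve_left (by positivity))

/-- Hopf lifts of antipodal nonzero vectors of `ℝ³` are linearly independent
over `ℂ`: if `h(u,v) = x` and `h(u′,v′) = −x` with `x ≠ 0`, then
`u·v′ − u′·v ≠ 0`; equivalently, the 2×2 matrix whose columns are the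
coefficient vectors `(−v, u)` and `(−v′, u′)` of `p(t) = u·t − v` and
`q(t) = u′·t − v′` has nonzero determinant. -/
theorem hopf_antipodal_lifts_indep (x : ℂ × ℝ) (hx : x ≠ 0)
    (u v u' v' : ℂ) (h0 : (u, v) ≠ (0, 0)) (h0' : (u', v') ≠ (0, 0))
    (h1 : hopf (u, v) = x) (h2 : hopf (u', v') = -x) :
    u * v' - u' * v ≠ 0 ∧ (Matrix.det !![-v, -v'; u, u']) ≠ 0 :=
  hopf_antipodal_lifts_indep_general x hx u v u' v' h0 h1 h2
end

section
/- Fix x ∈ C_n(ℝ³). Suppose u_{ab} = (u_{ab}, v_{ab}) and w_{ab} = (w_{ab}, z_{ab}) are two systems of Hopf lifts, i.e. h(u_{ab}, v_{ab}) = h(w_{ab}, z_{ab}) = x_b − x_a for all a ≠ b, and assume the denominator products ∏_{a<b} det(p_{ab}, p_{ba}) are nonzero for both systems. Then the value of the normalized determinant D(x) computed with the lifts u_{ab} equals the value computed with the lifts w_{ab}; that is, D(x) is independent of the choice of Hopf lifts. -/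
open Polynomial Finset ComplexConjugate

/-- `u, v` form a system of Hopf lifts for the configuration `x`:
`h(u_{ab}, v_{ab}) = x_b − x_a` for all `a ≠ b`. -/
def HopfLifts (n : ℕ) (x : Fin n → ℂ × ℝ) (u v : Fin n → Fin n → ℂ) : Prop :=
  ∀ a b : Fin n, a ≠ b → hopf (u a b, v a b) = x b - x a

/-- The Atiyah–Sutcliffe polynomial `p_a(t) = ∏_{b ≠ a} (u_{ab}·t − v_{ab})`. -/
noncomputable def ASpoly (n : ℕ) (u v : Fin n → Fin n → ℂ) (a : Fin n) : Polynomial ℂ :=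
  ∏ b ∈ Finset.univ.erase a, (Polynomial.C (u a b) * Polynomial.X - Polynomial.C (v a b))

/-- The `n × n` matrix whose `a`-th column consists of the coefficients of `p_a`,
ordered by increasing powers of `t`. -/
noncomputable def ASmatrix (n : ℕ) (u v : Fin n → Fin n → ℂ) : Matrix (Fin n) (Fin n) ℂ :=
  Matrix.of fun i a => (ASpoly n u v a).coeff i

/-- `det(p_{ab}, p_{ba})`: the determinant of the 2×2 matrix whose columns are the
coefficient vectors `(−v_{ab}, u_{ab})` and `(−v_{ba}, u_{ba})`. -/
noncomputable def ASpairDet (n : ℕ) (u v : Fin n → Fin n → ℂ) (a b : Fin n) : ℂ :=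
  Matrix.det !![-(v a b), -(v b a); u a b, u b a]

/-- The denominator `∏_{a<b} det(p_{ab}, p_{ba})` of the normalized determinant. -/
noncomputable def ASdenom (n : ℕ) (u v : Fin n → Fin n → ℂ) : ℂ :=
  ∏ p ∈ Finset.univ.filter (fun p : Fin n × Fin n => p.1 < p.2), ASpairDet n u v p.1 p.2

/-- The Atiyah–Sutcliffe normalized determinant
`D = det(p_1, …, p_n) / ∏_{a<b} det(p_{ab}, p_{ba})`, computed from the lifts `u, v`. -/
noncomputable def ASdet (n : ℕ) (u v : Fin n → Fin n → ℂ) : ℂ :=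
  (ASmatrix n u v).det / ASdenom n u v

/-!
Two Hopf lifts of the same nonzero vector differ by a unit scalar, since the fibres of the
Hopf map are circles. Rescaling the lifts of the ordered pair `(a, b)` by `λ_{ab}` multiplies
the column `p_a` by `∏_{b ≠ a} λ_{ab}` and the factor `det(p_{ab}, p_{ba})` by
`λ_{ab} λ_{ba}`, so numerator and denominator of `D` both acquire the same nonzero factor
`∏_{a ≠ b} λ_{ab}`.
-/

open ComplexConjugate

theorem Finset.prod_prod_erase_eq_prod_lt {ι M : Type*} [Fintype ι] [LinearOrder ι]
    [CommMonoid M] (f : ι → ι → M) :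
    ∏ a, ∏ b ∈ univ.erase a, f a b =
      ∏ p ∈ univ.filter (fun p : ι × ι => p.1 < p.2), f p.1 p.2 * f p.2 p.1 := by
  have hswap : ∏ p ∈ univ.filter (fun p : ι × ι => p.1 < p.2), f p.2 p.1 =
      ∏ p ∈ univ.filter (fun p : ι × ι => p.2 < p.1), f p.1 p.2 :=
    prod_nbij' Prod.swap Prod.swap (by simp) (by simp) (by simp) (by simp) (by simp)
  have hne : ∏ a, ∏ b ∈ univ.erase a, f a b =
      ∏ p ∈ univ.filter (fun p : ι × ι => p.1 ≠ p.2), f p.1 p.2 := by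
    rw [prod_filter, Fintype.prod_prod_type]
    refine Fintype.prod_congr _ _ fun a => ?_
    rw [← prod_filter]
    simp only [filter_ne]
  rw [hne, prod_mul_distrib, hswap, ← prod_union]
  · congr 1
    ext p
    simp only [mem_filter, mem_union, mem_univ, true_and, ne_iff_lt_or_gt]
  · exact disjoint_filter.2 fun p _ h h' => lt_asymm h h'

theorem hopf_zero : hopf 0 = 0 := by
  simp [hopf, Prod.ext_iff]

theorem norm_eq_norm_of_hopf_eq {p q : ℂ × ℂ} (h : hopf p = hopf q) :
    ‖p.1‖ = ‖q.1‖ ∧ ‖p.2‖ = ‖q.2‖ := by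
  have hdiff : ‖p.1‖ ^ 2 - ‖p.2‖ ^ 2 = ‖q.1‖ ^ 2 - ‖q.2‖ ^ 2 := congrArg Prod.snd h
  have hprod : ‖p.1‖ * ‖p.2‖ = ‖q.1‖ * ‖q.2‖ := by
    simpa [hopf, mul_assoc] using congrArg (‖·.1‖) h
  -- `(s² + t²)² = (s² − t²)² + 4 (s t)²`
  have hsum : ‖p.1‖ ^ 2 + ‖p.2‖ ^ 2 = ‖q.1‖ ^ 2 + ‖q.2‖ ^ 2 := by
    refine (pow_left_inj₀ (by positivity) (by positivity) two_ne_zero).1 ?_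
    linear_combination (‖p.1‖ ^ 2 - ‖p.2‖ ^ 2 + ‖q.1‖ ^ 2 - ‖q.2‖ ^ 2) * hdiff +
      4 * (‖p.1‖ * ‖p.2‖ + ‖q.1‖ * ‖q.2‖) * hprod
  constructor <;> refine (pow_left_inj₀ (norm_nonneg _) (norm_nonneg _) two_ne_zero).1 ?_
  · linear_combination (hsum + hdiff) / 2
  · linear_combination (hsum - hdiff) / 2

theorem exists_norm_eq_one_smul_of_hopf_eq {p q : ℂ × ℂ} (h : hopf p = hopf q) (hp : p ≠ 0) :
    ∃ l : ℂ, ‖l‖ = 1 ∧ q = l • p := by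
  obtain ⟨hnorm₁, hnorm₂⟩ := norm_eq_norm_of_hopf_eq h
  obtain ⟨u, v⟩ := p
  obtain ⟨w, z⟩ := q
  simp only at hnorm₁ hnorm₂
  by_cases hu : u = 0
  · have hw : w = 0 := norm_eq_zero.1 (by rw [← hnorm₁, hu, norm_zero])
    have hv : v ≠ 0 := fun hv => hp (by rw [hu, hv, Prod.mk_zero_zero])
    refine ⟨z / v, by rw [norm_div, ← hnorm₂, div_self (norm_ne_zero_iff.2 hv)], ?_⟩
    simp [hu, hw, hv]
  · refine ⟨w / u, by rw [norm_div, ← hnorm₁, div_self (norm_ne_zero_iff.2 hu)], ?_⟩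
    have hconj : conj u * v = conj w * z := by
      have h₁ := congrArg (fun y => conj y.1) h
      simp only [hopf, map_mul, Complex.conj_conj, map_ofNat] at h₁
      linear_combination h₁ / 2
    have hnormSq : u * conj u = w * conj w := by
      simp only [Complex.mul_conj, Complex.normSq_eq_norm_sq, hnorm₁]
    have hz : u * z = w * v := mul_left_cancel₀ ((_root_.map_ne_zero conj).2 hu)
      (by linear_combination z * hnormSq - w * hconj)
    simp only [Prod.smul_mk, smul_eq_mul, Prod.mk.injEq]
    constructor <;> field_simp
    linear_combination hz

section Rescaling

variable {n : ℕ} {u v w z l : Fin n → Fin n → ℂ}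

theorem ASpoly_rescale (hl : ∀ a b, a ≠ b → (w a b, z a b) = l a b • (u a b, v a b))
    (a : Fin n) : ASpoly n w z a = C (∏ b ∈ univ.erase a, l a b) * ASpoly n u v a := by
  rw [ASpoly, ASpoly, map_prod, ← prod_mul_distrib]
  refine prod_congr rfl fun b hb => ?_
  obtain ⟨hw, hz⟩ := Prod.mk.inj (hl a b (ne_of_mem_erase hb).symm)
  rw [hw, hz, smul_eq_mul, smul_eq_mul, C_mul, C_mul]
  ring

theorem det_ASmatrix_rescale (hl : ∀ a b, a ≠ b → (w a b, z a b) = l a b • (u a b, v a b)) :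
    (ASmatrix n w z).det = (∏ a, ∏ b ∈ univ.erase a, l a b) * (ASmatrix n u v).det := by
  have hcols : ASmatrix n w z =
      ASmatrix n u v * Matrix.diagonal fun a => ∏ b ∈ univ.erase a, l a b := by
    ext i a
    rw [Matrix.mul_diagonal, ASmatrix, ASmatrix, Matrix.of_apply, Matrix.of_apply,
      ASpoly_rescale hl, coeff_C_mul, mul_comm]
  rw [hcols, Matrix.det_mul, Matrix.det_diagonal, mul_comm]

theorem ASpairDet_rescale (hl : ∀ a b, a ≠ b → (w a b, z a b) = l a b • (u a b, v a b))
    {a b : Fin n} (hab : a ≠ b) :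
    ASpairDet n w z a b = l a b * l b a * ASpairDet n u v a b := by
  obtain ⟨hw, hz⟩ := Prod.mk.inj (hl a b hab)
  obtain ⟨hw', hz'⟩ := Prod.mk.inj (hl b a hab.symm)
  simp only [ASpairDet, Matrix.det_fin_two_of, hw, hz, hw', hz', smul_eq_mul]
  ring

theorem ASdenom_rescale (hl : ∀ a b, a ≠ b → (w a b, z a b) = l a b • (u a b, v a b)) :
    ASdenom n w z = (∏ a, ∏ b ∈ univ.erase a, l a b) * ASdenom n u v := by
  rw [ASdenom, ASdenom, prod_prod_erase_eq_prod_lt, ← prod_mul_distrib]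
  exact prod_congr rfl fun p hp => ASpairDet_rescale hl (mem_filter.1 hp).2.ne

theorem ASdet_rescale (hl : ∀ a b, a ≠ b → (w a b, z a b) = l a b • (u a b, v a b))
    (hl₀ : ∀ a b, a ≠ b → l a b ≠ 0) : ASdet n w z = ASdet n u v := by
  have hc : ∏ a, ∏ b ∈ univ.erase a, l a b ≠ 0 :=
    prod_ne_zero_iff.2 fun a _ =>
      prod_ne_zero_iff.2 fun b hb => hl₀ a b (ne_of_mem_erase hb).symm
  rw [ASdet, ASdet, det_ASmatrix_rescale hl, ASdenom_rescale hl, mul_div_mul_left _ _ hc]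

end Rescaling

theorem ASdet_lift_independent_general (n : ℕ) (x : Fin n → ℂ × ℝ)
    (hx : Function.Injective x)
    (u v w z : Fin n → Fin n → ℂ)
    (huv : HopfLifts n x u v) (hwz : HopfLifts n x w z) :
    ASdet n u v = ASdet n w z := by
  have hscalar : ∀ a b, ∃ l : ℂ, a ≠ b → ‖l‖ = 1 ∧ (w a b, z a b) = l • (u a b, v a b) := by
    intro a b
    by_cases hab : a = b
    · exact ⟨1, fun h => (h hab).elim⟩
    have hne : (u a b, v a b) ≠ 0 := fun h₀ =>
      hab (hx (sub_eq_zero.1 (by rw [← huv a b hab, h₀, hopf_zero]))).symm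
    obtain ⟨l, hl₁, hl⟩ :=
      exists_norm_eq_one_smul_of_hopf_eq ((huv a b hab).trans (hwz a b hab).symm) hne
    exact ⟨l, fun _ => ⟨hl₁, hl⟩⟩
  choose l hl using hscalar
  refine (ASdet_rescale (fun a b hab => (hl a b hab).2) fun a b hab => ?_).symm
  exact norm_ne_zero_iff.1 (by rw [(hl a b hab).1]; exact one_ne_zero)

/-- The Atiyah–Sutcliffe normalized determinant is independent of the choice of
Hopf lifts: if `(u,v)` and `(w,z)` are two systems of Hopf lifts for the same
configuration `x` of pairwise distinct points, whose denominator products are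
nonzero, then they yield the same value of `D(x)`. -/
theorem ASdet_lift_independent (n : ℕ) (x : Fin n → ℂ × ℝ)
    (hx : Function.Injective x)
    (u v w z : Fin n → Fin n → ℂ)
    (huv : HopfLifts n x u v) (hwz : HopfLifts n x w z)
    (hd1 : ASdenom n u v ≠ 0) (hd2 : ASdenom n w z ≠ 0) :
    ASdet n u v = ASdet n w z :=
  ASdet_lift_independent_general n x hx u v w z huv hwz
end

section
/- Let g : ℝ^m → ℝ^{2m} be the linear map sending the a-th standard basis vector e_a to v_{2a−1} − v_{2a}, where v_1, …, v_{2m} are the standard basis vectors of ℝ^{2m}. Let A = { y_α − y_β : 1 ≤ α, β ≤ 2m, α ≠ β } ⊆ (ℝ^{2m})^*, where y_1, …, y_{2m} is the dual basis of v_1, …, v_{2m}, and let C = { ±x_a ± x_b : 1 ≤ a < b ≤ m } ∪ { ±2x_a : 1 ≤ a ≤ m } ⊆ (ℝ^m)^*, where x_1, …, x_m is the dual basis of e_1, …, e_m. Then the pullback of A under g equals C, i.e. { φ ∘ g : φ ∈ A } = C. (A and C are the root systems of U(2m) and Sp(m) respectively; thus the root system of U(2m) dominates that of Sp(m).) -/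
theorem pullback_key_aux (m : ℕ)
    (g : (Fin m → ℝ) →ₗ[ℝ] (Fin (2 * m) → ℝ))
    (hg : ∀ a : Fin m,
      g (Pi.single a 1) =
        Pi.single (⟨2 * (a : ℕ), (by have := a.isLt; omega : 2 * (a : ℕ) < 2 * m + 0)⟩ : Fin (2 * m)) (1 : ℝ)
          - Pi.single (⟨2 * (a : ℕ) + 1, (by have := a.isLt; omega : 2 * (a : ℕ) + 1 < 2 * m + 0)⟩ : Fin (2 * m)) (1 : ℝ))
    (α : Fin (2*m)) :
    (LinearMap.proj α : (Fin (2*m) → ℝ) →ₗ[ℝ] ℝ).comp g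
      = (if (α:ℕ) % 2 = 0 then (1:ℝ) else -1) •
        (LinearMap.proj (⟨(α:ℕ)/2, by have := α.isLt; omega⟩ : Fin m) : (Fin m → ℝ) →ₗ[ℝ] ℝ) := by
  refine LinearMap.pi_ext' fun a => LinearMap.ext_ring ?_
  have := α.isLt
  simp only [LinearMap.comp_apply, LinearMap.coe_single, LinearMap.proj_apply,
    LinearMap.smul_apply, smul_eq_mul, hg a, Pi.sub_apply, Pi.single_apply, Fin.ext_iff]
  split_ifs <;> simp_all <;> omega

theorem pullback_keyE_aux (m : ℕ)
    (g : (Fin m → ℝ) →ₗ[ℝ] (Fin (2 * m) → ℝ))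
    (hg : ∀ a : Fin m,
      g (Pi.single a 1) =
        Pi.single (⟨2 * (a : ℕ), (by have := a.isLt; omega : 2 * (a : ℕ) < 2 * m + 0)⟩ : Fin (2 * m)) (1 : ℝ)
          - Pi.single (⟨2 * (a : ℕ) + 1, (by have := a.isLt; omega : 2 * (a : ℕ) + 1 < 2 * m + 0)⟩ : Fin (2 * m)) (1 : ℝ))
    (a : Fin m) :
    (LinearMap.proj (⟨2*(a:ℕ), (by have := a.isLt; omega : 2*(a:ℕ) < 2 * m + 0)⟩ : Fin (2*m)) :
      (Fin (2*m) → ℝ) →ₗ[ℝ] ℝ).comp g = LinearMap.proj a := by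
  rw [pullback_key_aux m g hg, if_pos (by show 2*(a:ℕ) % 2 = 0; omega), one_smul]
  congr 1
  exact Fin.ext (by show 2*(a:ℕ)/2 = (a:ℕ); omega)

theorem pullback_keyO_aux (m : ℕ)
    (g : (Fin m → ℝ) →ₗ[ℝ] (Fin (2 * m) → ℝ))
    (hg : ∀ a : Fin m,
      g (Pi.single a 1) =
        Pi.single (⟨2 * (a : ℕ), (by have := a.isLt; omega : 2 * (a : ℕ) < 2 * m + 0)⟩ : Fin (2 * m)) (1 : ℝ)
          - Pi.single (⟨2 * (a : ℕ) + 1, (by have := a.isLt; omega : 2 * (a : ℕ) + 1 < 2 * m + 0)⟩ : Fin (2 * m)) (1 : ℝ))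
    (a : Fin m) :
    (LinearMap.proj (⟨2*(a:ℕ)+1, (by have := a.isLt; omega : 2*(a:ℕ)+1 < 2 * m + 0)⟩ : Fin (2*m)) :
      (Fin (2*m) → ℝ) →ₗ[ℝ] ℝ).comp g = -LinearMap.proj a := by
  rw [pullback_key_aux m g hg, if_neg (by show ¬(2*(a:ℕ)+1) % 2 = 0; omega), show ∀ x : (Fin m → ℝ) →ₗ[ℝ] ℝ, (-1:ℝ) • x = -x from fun x => neg_one_smul ℝ x]
  have e : (⟨(2*(a:ℕ)+1)/2, by have := a.isLt; omega⟩ : Fin m) = a :=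
    Fin.ext (by show (2*(a:ℕ)+1)/2 = (a:ℕ); omega)
  rw [e]

/-- Let `g : ℝ^m → ℝ^{2m}` be the linear map sending the `a`-th standard basis
vector `e_a` to `v_{2a−1} − v_{2a}` (in 0-indexed notation, `e_a ↦ v_{2a} − v_{2a+1}`).
Let `A = { y_α − y_β : α ≠ β }` be the root system of `U(2m)` (differences of dual
basis functionals on `ℝ^{2m}`) and
`C = { ±x_a ± x_b : a < b } ∪ { ±2x_a }` the root system of `Sp(m)` (in terms of the
dual basis functionals on `ℝ^m`). Then the pullback of `A` under `g` equals `C`: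
`{ φ ∘ g : φ ∈ A } = C`. -/
theorem pullback_rootSystem_U2m_eq_rootSystem_Spm (m : ℕ)
    (g : (Fin m → ℝ) →ₗ[ℝ] (Fin (2 * m) → ℝ))
    (hg : ∀ a : Fin m,
      g (Pi.single a 1) =
        Pi.single (⟨2 * (a : ℕ), by have := a.isLt; omega⟩ : Fin (2 * m)) (1 : ℝ)
          - Pi.single (⟨2 * (a : ℕ) + 1, by have := a.isLt; omega⟩ : Fin (2 * m)) (1 : ℝ)) :
    (fun φ : (Fin (2 * m) → ℝ) →ₗ[ℝ] ℝ => φ.comp g) ''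
        { φ | ∃ α β : Fin (2 * m), α ≠ β ∧
            φ = (LinearMap.proj α : (Fin (2 * m) → ℝ) →ₗ[ℝ] ℝ) - LinearMap.proj β } =
      { ψ : (Fin m → ℝ) →ₗ[ℝ] ℝ |
        (∃ a b : Fin m, a < b ∧
          (ψ = (LinearMap.proj a : (Fin m → ℝ) →ₗ[ℝ] ℝ) + LinearMap.proj b ∨
           ψ = (LinearMap.proj a : (Fin m → ℝ) →ₗ[ℝ] ℝ) - LinearMap.proj b ∨
           ψ = -(LinearMap.proj a : (Fin m → ℝ) →ₗ[ℝ] ℝ) + LinearMap.proj b ∨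
           ψ = -(LinearMap.proj a : (Fin m → ℝ) →ₗ[ℝ] ℝ) - LinearMap.proj b)) ∨
        (∃ a : Fin m,
          ψ = (2 : ℝ) • (LinearMap.proj a : (Fin m → ℝ) →ₗ[ℝ] ℝ) ∨
          ψ = -((2 : ℝ) • (LinearMap.proj a : (Fin m → ℝ) →ₗ[ℝ] ℝ))) } := by
  have key := pullback_key_aux m g hg
  have kE := pullback_keyE_aux m g hg
  have kO := pullback_keyO_aux m g hg
  have hn1 : ∀ x : (Fin m → ℝ) →ₗ[ℝ] ℝ, (-1:ℝ) • x = -x := fun x => neg_one_smul ℝ x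
  ext ψ
  simp only [Set.mem_image, Set.mem_setOf_eq]
  constructor
  · rintro ⟨φ, ⟨α, β, hne, rfl⟩, rfl⟩
    have hαβ : (α:ℕ) ≠ (β:ℕ) := fun h => hne (Fin.ext h)
    have hα := α.isLt; have hβ := β.isLt
    rw [LinearMap.sub_comp, key α, key β]
    rcases Nat.mod_two_eq_zero_or_one (α:ℕ) with h1 | h1 <;>
      rcases Nat.mod_two_eq_zero_or_one (β:ℕ) with h2 | h2 <;>
      simp only [h1, h2, Nat.one_ne_zero, if_true, if_false, ite_true, ite_false,
        eq_self_iff_true, one_smul, hn1, sub_neg_eq_add] <;>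
      rcases Nat.lt_trichotomy ((α:ℕ)/2) ((β:ℕ)/2) with h3 | h3 | h3
    · exact Or.inl ⟨⟨(α:ℕ)/2, by omega⟩, ⟨(β:ℕ)/2, by omega⟩, Fin.mk_lt_mk.mpr h3,
        Or.inr (Or.inl (by abel))⟩
    · omega
    · exact Or.inl ⟨⟨(β:ℕ)/2, by omega⟩, ⟨(α:ℕ)/2, by omega⟩, Fin.mk_lt_mk.mpr h3,
        Or.inr (Or.inr (Or.inl (by abel)))⟩
    · exact Or.inl ⟨⟨(α:ℕ)/2, by omega⟩, ⟨(β:ℕ)/2, by omega⟩, Fin.mk_lt_mk.mpr h3,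
        Or.inl (by abel)⟩
    · refine Or.inr ⟨⟨(α:ℕ)/2, by omega⟩, Or.inl ?_⟩
      have hba : (⟨(β:ℕ)/2, by omega⟩ : Fin m) = ⟨(α:ℕ)/2, by omega⟩ := Fin.ext h3.symm
      rw [hba, two_smul]
    · exact Or.inl ⟨⟨(β:ℕ)/2, by omega⟩, ⟨(α:ℕ)/2, by omega⟩, Fin.mk_lt_mk.mpr h3,
        Or.inl (by abel)⟩
    · exact Or.inl ⟨⟨(α:ℕ)/2, by omega⟩, ⟨(β:ℕ)/2, by omega⟩, Fin.mk_lt_mk.mpr h3,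
        Or.inr (Or.inr (Or.inr (by abel)))⟩
    · refine Or.inr ⟨⟨(α:ℕ)/2, by omega⟩, Or.inr ?_⟩
      have hba : (⟨(β:ℕ)/2, by omega⟩ : Fin m) = ⟨(α:ℕ)/2, by omega⟩ := Fin.ext h3.symm
      rw [hba, two_smul]; abel
    · exact Or.inl ⟨⟨(β:ℕ)/2, by omega⟩, ⟨(α:ℕ)/2, by omega⟩, Fin.mk_lt_mk.mpr h3,
        Or.inr (Or.inr (Or.inr (by abel)))⟩
    · exact Or.inl ⟨⟨(α:ℕ)/2, by omega⟩, ⟨(β:ℕ)/2, by omega⟩, Fin.mk_lt_mk.mpr h3,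
        Or.inr (Or.inr (Or.inl (by abel)))⟩
    · omega
    · exact Or.inl ⟨⟨(β:ℕ)/2, by omega⟩, ⟨(α:ℕ)/2, by omega⟩, Fin.mk_lt_mk.mpr h3,
        Or.inr (Or.inl (by abel))⟩
  · rintro (⟨a, b, hab, h | h | h | h⟩ | ⟨a, h | h⟩) <;> subst h
    · exact ⟨_, ⟨⟨2*(a:ℕ), by have := a.isLt; omega⟩, ⟨2*(b:ℕ)+1, by have := b.isLt; omega⟩,
        fun h => by have h' : (a:ℕ) < b := hab; rw [Fin.mk.injEq] at h; omega, rfl⟩,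
        by rw [LinearMap.sub_comp, kE, kO]; abel⟩
    · exact ⟨_, ⟨⟨2*(a:ℕ), by have := a.isLt; omega⟩, ⟨2*(b:ℕ), by have := b.isLt; omega⟩,
        fun h => by have h' : (a:ℕ) < b := hab; rw [Fin.mk.injEq] at h; omega, rfl⟩,
        by rw [LinearMap.sub_comp, kE, kE]⟩
    · exact ⟨_, ⟨⟨2*(b:ℕ), by have := b.isLt; omega⟩, ⟨2*(a:ℕ), by have := a.isLt; omega⟩,
        fun h => by have h' : (a:ℕ) < b := hab; rw [Fin.mk.injEq] at h; omega, rfl⟩,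
        by rw [LinearMap.sub_comp, kE, kE]; abel⟩
    · exact ⟨_, ⟨⟨2*(a:ℕ)+1, by have := a.isLt; omega⟩, ⟨2*(b:ℕ), by have := b.isLt; omega⟩,
        fun h => by have h' : (a:ℕ) < b := hab; rw [Fin.mk.injEq] at h; omega, rfl⟩,
        by rw [LinearMap.sub_comp, kO, kE]⟩
    · exact ⟨_, ⟨⟨2*(a:ℕ), by have := a.isLt; omega⟩, ⟨2*(a:ℕ)+1, by have := a.isLt; omega⟩,
        fun h => by rw [Fin.mk.injEq] at h; omega, rfl⟩,
        by rw [LinearMap.sub_comp, kE, kO, two_smul]; abel⟩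
    · exact ⟨_, ⟨⟨2*(a:ℕ)+1, by have := a.isLt; omega⟩, ⟨2*(a:ℕ), by have := a.isLt; omega⟩,
        fun h => by rw [Fin.mk.injEq] at h; omega, rfl⟩,
        by rw [LinearMap.sub_comp, kO, kE, two_smul]; abel⟩
end
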